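/- Let t ∈ ℕ, let C be a clonoid with source set A = {1,2,…,t} and target algebra B, and let α ⊆ B × B. Then Ψ(C, α) := { a ∈ A^+ : Φ(C, a) ⊆ α } is an upward closed subset of the partially ordered set (A^+, ≤_a). -/

import Mathlib

/-! A witness `h` of `a ≤ₐ b` admits a retraction `σ` with `a ∘ σ = b` that sends every position
before `h i` to a position before `i`: positions of `b` outside the image of `h` are sent to the
first occurrence of their letter in `a`, which the first-occurrence condition places early enough.
Hence `c <lex a` implies `c ∘ σ <lex b`, so the `σ`-minors of a fork of `C` at `b` form a fork
at `a` with the same value pair, and `Φ(C, b) ⊆ Φ(C, a)`. -/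

open FirstOrder FirstOrder.Language

/-- `C` is a clonoid with source set `S` and target algebra `B`: writing
`C n` for its `n`-ary part (a set of functions `Sⁿ → B`), each `C n` is a
subuniverse of `B^(Sⁿ)` (closed under the componentwise operations of `B`),
and `C` is closed under manipulation (permuting and identifying) of arguments. -/
def IsClonoid (L : FirstOrder.Language) (S B : Type) [L.Structure B]
    (C : ∀ n : ℕ, Set ((Fin n → S) → B)) : Prop :=
  (∀ (n l : ℕ) (f : L.Functions l) (g : Fin l → ((Fin n → S) → B)),
      (∀ i, g i ∈ C n) →
      (fun v : Fin n → S => Structure.funMap f (fun i => g i v)) ∈ C n) ∧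
  (∀ (k n : ℕ) (σ : Fin k → Fin n), ∀ c ∈ C k,
      (fun v : Fin n → S => c (fun i => v (σ i))) ∈ C n)

/-- The strict lexicographic order on tuples `Fin n → Fin t`
(for `A = {1, …, t}` with its natural order). -/
def LtLex {n t : ℕ} (c a : Fin n → Fin t) : Prop :=
  ∃ i : Fin n, (∀ j : Fin n, j < i → c j = a j) ∧ c i < a i

/-- `Φ(C, a)`: the set of forks of `C` at the tuple `a ∈ Aⁿ`, i.e. all pairs
`(f a, g a)` where `f, g` are `n`-ary members of `C` that agree on all tuples
lexicographically smaller than `a`. -/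
def PhiX {B : Type} {t : ℕ}
    (C : ∀ n : ℕ, Set ((Fin n → Fin t) → B)) {n : ℕ} (a : Fin n → Fin t) :
    Set (B × B) :=
  {p | ∃ f ∈ C n, ∃ g ∈ C n,
        (∀ c : Fin n → Fin t, LtLex c a → f c = g c) ∧ p = (f a, g a)}

/-- `h` witnesses `a ≤ₐ b` for tuples `a ∈ Aᵐ`, `b ∈ Aⁿ` over `A = {1, …, t}`:
`h` is injective and increasing, `aᵢ = b_{h i}`, `a` and `b` have the same set of
letters, and `h` maps the first occurrence of each letter of `a` to the first
occurrence of that letter in `b`. -/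
def WitnessesF {t m n : ℕ} (a : Fin m → Fin t) (b : Fin n → Fin t)
    (h : Fin m → Fin n) : Prop :=
  StrictMono h ∧
  (∀ i : Fin m, a i = b (h i)) ∧
  Set.range a = Set.range b ∧
  (∀ i : Fin m, (∀ i' : Fin m, i' < i → a i' ≠ a i) →
    ∀ j : Fin n, j < h i → b j ≠ a i)

/-- `A⁺`: the finite tuples over `A = {1, …, t}`. -/
def TupF (t : ℕ) : Type := Σ n : ℕ, Fin n → Fin t

/-- The order `≤ₐ` on tuples over `A = {1, …, t}`. -/
def LeAF {t : ℕ} (a b : TupF t) : Prop :=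
  ∃ h : Fin a.1 → Fin b.1, WitnessesF a.2 b.2 h

/-- `Ψ(C, α)`: the set of tuples `a ∈ A⁺` at which all forks of `C` lie in `α`. -/
def PsiX {B : Type} {t : ℕ}
    (C : ∀ n : ℕ, Set ((Fin n → Fin t) → B)) (α : Set (B × B)) : Set (TupF t) :=
  {a | PhiX C a.2 ⊆ α}

theorem exists_first_occurrence {α : Type*} {m : ℕ} {a : Fin m → α} {x : α}
    (hx : x ∈ Set.range a) : ∃ q, a q = x ∧ ∀ q' < q, a q' ≠ x := by
  obtain ⟨q, hq, hmin⟩ := wellFounded_lt.has_min {q | a q = x} hx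
  exact ⟨q, hq, fun q' hq' heq => hmin q' heq hq'⟩

section

variable {t m n : ℕ} {a : Fin m → Fin t} {b : Fin n → Fin t}

theorem WitnessesF.exists_retraction {h : Fin m → Fin n} (hw : WitnessesF a b h) :
    ∃ σ : Fin n → Fin m,
      (∀ j, a (σ j) = b j) ∧ (∀ i, σ (h i) = i) ∧ ∀ i j, j < h i → σ j < i := by
  classical
  obtain ⟨hmono, hab, hrange, hfirst⟩ := hw
  choose fo hfo_eq hfo_first using fun j =>
    exists_first_occurrence (show b j ∈ Set.range a from hrange ▸ ⟨j, rfl⟩)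
  refine ⟨fun j => if hj : ∃ i, h i = j then hj.choose else fo j, ?_, ?_, ?_⟩
  · intro j
    dsimp only
    split_ifs with hj
    · rw [hab, hj.choose_spec]
    · exact hfo_eq j
  · intro i
    have hi : ∃ i', h i' = h i := ⟨i, rfl⟩
    simp only [dif_pos hi]
    exact hmono.injective hi.choose_spec
  · intro i j hji
    dsimp only
    split_ifs with hj
    · exact hmono.lt_iff_lt.mp (hj.choose_spec.symm ▸ hji)
    · by_contra! hle
      have hfo_is_first : ∀ q < fo j, a q ≠ a (fo j) := by
        rw [hfo_eq]
        exact hfo_first j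
      exact hfirst (fo j) hfo_is_first j (hji.trans_le (hmono.monotone hle)) (hfo_eq j).symm

theorem LtLex.comp_retraction {c : Fin m → Fin t} {σ : Fin n → Fin m} {h : Fin m → Fin n}
    (hσb : ∀ j, a (σ j) = b j) (hσh : ∀ i, σ (h i) = i) (hσlt : ∀ i j, j < h i → σ j < i)
    (hc : LtLex c a) : LtLex (fun j => c (σ j)) b := by
  obtain ⟨i, hpre, hlt⟩ := hc
  refine ⟨h i, fun j hj => ?_, ?_⟩
  · show c (σ j) = b j
    rw [hpre _ (hσlt i j hj), hσb]
  · show c (σ (h i)) < b (h i)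
    rw [← hσb, hσh]
    exact hlt

theorem phiX_subset_phiX_of_minor {B : Type} {C : ∀ n : ℕ, Set ((Fin n → Fin t) → B)}
    {σ : Fin n → Fin m}
    (hminor : ∀ f ∈ C n, (fun v : Fin m → Fin t => f (fun j => v (σ j))) ∈ C m)
    (hσb : ∀ j, a (σ j) = b j) (hlex : ∀ c, LtLex c a → LtLex (fun j => c (σ j)) b) :
    PhiX C b ⊆ PhiX C a := by
  rintro _ ⟨f, hf, g, hg, hagree, rfl⟩
  have hb : (fun j => a (σ j)) = b := funext hσb
  refine ⟨_, hminor f hf, _, hminor g hg, fun c hc => hagree _ (hlex c hc), ?_⟩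
  simp only [hb]

end

/-- **Lemma (upward closedness of `Ψ`).** Let `C` be a clonoid with source set
`A = {1, …, t}` and target algebra `B`, and let `α ⊆ B × B`. Then
`Ψ(C, α) = { a ∈ A⁺ : Φ(C, a) ⊆ α }` is an upward closed subset of `(A⁺, ≤ₐ)`. -/
theorem psiX_upward_closed
    (L : FirstOrder.Language) (B : Type) [L.Structure B] (t : ℕ)
    (C : ∀ n : ℕ, Set ((Fin n → Fin t) → B)) (hC : IsClonoid L (Fin t) B C)
    (α : Set (B × B)) :
    ∀ a ∈ PsiX C α, ∀ b : TupF t, LeAF a b → b ∈ PsiX C α := by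
  rintro ⟨m, a⟩ ha ⟨n, b⟩ ⟨h, hw⟩
  obtain ⟨σ, hσb, hσh, hσlt⟩ := hw.exists_retraction
  exact (phiX_subset_phiX_of_minor (hC.2 n m σ) hσb
    fun c => LtLex.comp_retraction hσb hσh hσlt).trans ha
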